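/- arXiv:2308.02107 — 6 statements merged into one kernel-verified Lean document; each statement's English description precedes it below -/
import Mathlib

section
/- For every real s ≥ 3 there exists a constant C_s > 0, depending only on s, such that for all ξ, η ∈ ℝ² one has | |ξ|^s − |η|^s − |ξ−η|^s − s((ξ−η)·η)|ξ−η|^{s−2} | ≤ C_s ( |η|² |ξ−η|^{s−2} + |ξ−η| |η|^{s−1} ). -/
/-!
Write `a = ‖ξ - η‖`, `b = ‖η‖`, `t = ⟪ξ - η, η⟫`, so that `|t| ≤ a b` and
`‖ξ‖² = a² + 2t + b²`.

If `a ≤ 2b`, each of the four terms is separately `O(a b^{s-1} + b² a^{s-2})`; for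
`‖ξ‖^s - ‖η‖^s` this is the mean value theorem, as `|‖ξ‖ - ‖η‖| ≤ a` and `‖ξ‖ ≤ 3b`.

If `a > 2b`, then `‖ξ‖²` stays within a factor `4` of `a²`, and
`s t a^{s-2} + (s/2) b² a^{s-2}` is the first-order Taylor term of `x ↦ x^{s/2}` at `a²`
evaluated at `‖ξ‖²`. Two applications of the mean value theorem bound the remainder by a
constant times `a^{s-4} (2t + b²)² ≤ 9 b² a^{s-2}`.
-/

open Real Set

namespace Real

theorem rpow_eq_sq_rpow_half {x : ℝ} (hx : 0 ≤ x) (s : ℝ) : x ^ s = (x ^ 2) ^ (s / 2) := by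
  rw [← rpow_natCast_mul hx, Nat.cast_ofNat, mul_div_cancel₀ _ two_ne_zero]

theorem rpow_eq_sq_mul_rpow_sub_two {x s : ℝ} (hx : 0 ≤ x) (hs : s ≠ 0) :
    x ^ s = x ^ 2 * x ^ (s - 2) := by
  rw [← rpow_two, ← rpow_add' hx (by simpa using hs)]; ring_nf

theorem exists_mem_uIcc_rpow_sub_rpow_eq {q x y : ℝ} (hq : 0 ≤ q) (hx : 0 ≤ x) (hy : 0 ≤ y) :
    ∃ c ∈ uIcc x y, y ^ q - x ^ q = q * c ^ (q - 1) * (y - x) := by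
  wlog hxy : x < y generalizing x y
  · rcases (not_lt.mp hxy).eq_or_lt with rfl | hyx
    · exact ⟨_, left_mem_uIcc, by ring⟩
    · obtain ⟨c, hc, h⟩ := this hy hx hyx
      exact ⟨c, uIcc_comm x y ▸ hc, by linear_combination -h⟩
  have hderiv : ∀ c ∈ Ioo x y, HasDerivAt (· ^ q) (q * c ^ (q - 1)) c := fun c hc =>
    hasDerivAt_rpow_const (Or.inl (hx.trans_lt hc.1).ne')
  obtain ⟨c, hc, h⟩ := exists_hasDerivAt_eq_slope _ _ hxy
    (continuous_rpow_const hq).continuousOn hderiv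
  refine ⟨c, Icc_subset_uIcc (Ioo_subset_Icc_self hc), ?_⟩
  rw [h, div_mul_cancel₀ _ (sub_ne_zero.mpr hxy.ne')]

theorem abs_rpow_sub_rpow_le {q x y : ℝ} (hq : 1 ≤ q) (hx : 0 ≤ x) (hy : 0 ≤ y) :
    |y ^ q - x ^ q| ≤ q * max x y ^ (q - 1) * |y - x| := by
  obtain ⟨c, hc, h⟩ := exists_mem_uIcc_rpow_sub_rpow_eq (q := q) (by linarith) hx hy
  have hc0 : 0 ≤ c := (le_min hx hy).trans hc.1
  rw [h, abs_mul, abs_mul, abs_of_nonneg (by linarith), abs_of_nonneg (rpow_nonneg hc0 _)]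
  gcongr
  exact hc.2

theorem exists_mem_uIcc_abs_rpow_sub_rpow_sub_le {p x y : ℝ} (hp : 1 ≤ p) (hx : 0 ≤ x)
    (hy : 0 ≤ y) :
    ∃ d ∈ uIcc x y,
      |y ^ p - x ^ p - p * x ^ (p - 1) * (y - x)| ≤ p * (p - 1) * d ^ (p - 2) * (y - x) ^ 2 := by
  obtain ⟨c, hc, hc_eq⟩ := exists_mem_uIcc_rpow_sub_rpow_eq (q := p) (by linarith) hx hy
  have hc0 : 0 ≤ c := (le_min hx hy).trans hc.1
  obtain ⟨d, hd, hd_eq⟩ := exists_mem_uIcc_rpow_sub_rpow_eq (sub_nonneg.mpr hp) hx hc0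
  have hd0 : 0 ≤ d := (le_min hx hc0).trans hd.1
  have hK : 0 ≤ p * (p - 1) * d ^ (p - 2) :=
    mul_nonneg (mul_nonneg (by linarith) (by linarith)) (rpow_nonneg hd0 _)
  refine ⟨d, uIcc_subset_uIcc_left hc hd, ?_⟩
  calc |y ^ p - x ^ p - p * x ^ (p - 1) * (y - x)|
      = p * (p - 1) * d ^ (p - 2) * (|c - x| * |y - x|) := by
        rw [hc_eq, show p * c ^ (p - 1) * (y - x) - p * x ^ (p - 1) * (y - x)
            = p * (c ^ (p - 1) - x ^ (p - 1)) * (y - x) by ring, hd_eq,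
          show p - 1 - 1 = p - 2 by ring, ← abs_mul, ← abs_of_nonneg hK, ← abs_mul]
        ring_nf
    _ ≤ p * (p - 1) * d ^ (p - 2) * (|y - x| * |y - x|) := by
        gcongr _ * (?_ * _)
        exact abs_sub_left_of_mem_uIcc hc
    _ = p * (p - 1) * d ^ (p - 2) * (y - x) ^ 2 := by rw [← sq, sq_abs]

theorem rpow_le_rpow_abs_of_mem_Icc {c x r : ℝ} (hc : 0 < c) (hx : x ∈ Icc c⁻¹ c) :
    x ^ r ≤ c ^ |r| := by
  have hx0 : 0 < x := (inv_pos.mpr hc).trans_le hx.1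
  rcases le_total 0 r with hr | hr
  · rw [abs_of_nonneg hr]; exact rpow_le_rpow hx0.le hx.2 hr
  · rw [abs_of_nonpos hr, rpow_neg hc.le, ← inv_rpow hc.le]
    exact rpow_le_rpow_of_nonpos (inv_pos.mpr hc) hx.1 hr

theorem abs_rpow_sub_rpow_sub_le_of_mem_Icc {p x y : ℝ} (hp : 1 ≤ p) (hx : 0 < x)
    (hy : y ∈ Icc (x / 4) (4 * x)) :
    |y ^ p - x ^ p - p * x ^ (p - 1) * (y - x)|
      ≤ p * (p - 1) * 4 ^ |p - 2| * x ^ (p - 2) * (y - x) ^ 2 := by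
  obtain ⟨d, hd, hrem⟩ :=
    exists_mem_uIcc_abs_rpow_sub_rpow_sub_le (y := y) hp hx.le (by linarith [hy.1])
  have hxI : x ∈ Icc (x / 4) (4 * x) := ⟨by linarith, by linarith⟩
  obtain ⟨hd1, hd2⟩ := uIcc_subset_Icc hxI hy hd
  have hdx : d / x ∈ Icc 4⁻¹ 4 :=
    ⟨by rw [le_div_iff₀ hx]; linarith, by rw [div_le_iff₀ hx]; linarith⟩
  have hdx0 : 0 < d / x := div_pos (by linarith) hx
  have hdpow : d ^ (p - 2) ≤ 4 ^ |p - 2| * x ^ (p - 2) :=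
    calc d ^ (p - 2) = (d / x) ^ (p - 2) * x ^ (p - 2) := by
          rw [← mul_rpow hdx0.le hx.le, div_mul_cancel₀ _ hx.ne']
      _ ≤ 4 ^ |p - 2| * x ^ (p - 2) := by
          gcongr; exact rpow_le_rpow_abs_of_mem_Icc four_pos hdx
  calc _ ≤ p * (p - 1) * d ^ (p - 2) * (y - x) ^ 2 := hrem
    _ ≤ p * (p - 1) * (4 ^ |p - 2| * x ^ (p - 2)) * (y - x) ^ 2 := by gcongr
    _ = _ := by ring

end Real

section

variable {E : Type*} [NormedAddCommGroup E] [InnerProductSpace ℝ E] {s : ℝ} {w η : E}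

theorem abs_norm_add_rpow_sub_le_of_norm_le_two_mul (hs : 1 ≤ s) (h : ‖w‖ ≤ 2 * ‖η‖) :
    |‖w + η‖ ^ s - ‖η‖ ^ s - ‖w‖ ^ s - s * inner ℝ w η * ‖w‖ ^ (s - 2)|
      ≤ (s * 3 ^ (s - 1) + 2 * s + 4) * (‖η‖ ^ 2 * ‖w‖ ^ (s - 2) + ‖w‖ * ‖η‖ ^ (s - 1)) := by
  set a := ‖w‖
  set b := ‖η‖
  set t := inner ℝ w η
  have ha : 0 ≤ a := norm_nonneg w
  have hb : 0 ≤ b := norm_nonneg η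
  have ht : |t| ≤ a * b := abs_real_inner_le_norm w η
  have hfirst : |‖w + η‖ ^ s - b ^ s| ≤ s * 3 ^ (s - 1) * (a * b ^ (s - 1)) := by
    have hmax : max b ‖w + η‖ ≤ 3 * b :=
      max_le (by linarith) (by linarith [norm_add_le w η])
    have hdiff : |‖w + η‖ - b| ≤ a := by
      simpa using abs_norm_sub_norm_le (w + η) η
    calc |‖w + η‖ ^ s - b ^ s| ≤ s * max b ‖w + η‖ ^ (s - 1) * |‖w + η‖ - b| :=
          abs_rpow_sub_rpow_le hs hb (norm_nonneg _)
      _ ≤ s * (3 * b) ^ (s - 1) * a := by gcongr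
      _ = s * 3 ^ (s - 1) * (a * b ^ (s - 1)) := by
          rw [mul_rpow (by norm_num) hb]; ring
  have hsecond : a ^ s ≤ 4 * (b ^ 2 * a ^ (s - 2)) := by
    rw [rpow_eq_sq_mul_rpow_sub_two ha (by linarith), ← mul_assoc]
    gcongr
    nlinarith
  have hthird : |s * t * a ^ (s - 2)| ≤ 2 * s * (b ^ 2 * a ^ (s - 2)) := by
    rw [abs_mul, abs_mul, abs_of_nonneg (by linarith : 0 ≤ s),
      abs_of_nonneg (by positivity : 0 ≤ a ^ (s - 2))]
    have : |t| ≤ 2 * b ^ 2 := ht.trans (by nlinarith)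
    calc s * |t| * a ^ (s - 2) ≤ s * (2 * b ^ 2) * a ^ (s - 2) := by gcongr
      _ = 2 * s * (b ^ 2 * a ^ (s - 2)) := by ring
  have : 0 ≤ a ^ s := by positivity
  have : 0 ≤ s * 3 ^ (s - 1) * (b ^ 2 * a ^ (s - 2)) := by
    have : 0 ≤ s := by linarith
    positivity
  have : 0 ≤ (2 * s + 4) * (a * b ^ (s - 1)) := by
    have : 0 ≤ s := by linarith
    positivity
  rw [abs_le] at hfirst hthird ⊢
  constructor <;> linarith

theorem abs_norm_add_rpow_sub_rpow_sub_le_of_two_mul_lt (hs : 2 ≤ s) (h : 2 * ‖η‖ < ‖w‖) :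
    |‖w + η‖ ^ s - ‖w‖ ^ s - s / 2 * ‖w‖ ^ (s - 2) * (2 * inner ℝ w η + ‖η‖ ^ 2)|
      ≤ 9 * (s / 2) * (s / 2 - 1) * 4 ^ |s / 2 - 2| * (‖η‖ ^ 2 * ‖w‖ ^ (s - 2)) := by
  set a := ‖w‖
  set b := ‖η‖
  set t := inner ℝ w η
  have ha : 0 < a := by linarith [norm_nonneg η]
  obtain ⟨htl, htr⟩ := abs_le.mp (abs_real_inner_le_norm w η)
  have hX : ‖w + η‖ ^ 2 = a ^ 2 + (2 * t + b ^ 2) := by rw [norm_add_sq_real]; ring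
  have hXI : ‖w + η‖ ^ 2 ∈ Icc (a ^ 2 / 4) (4 * a ^ 2) := by
    rw [hX]; constructor <;> nlinarith [norm_nonneg η]
  have hrem := abs_rpow_sub_rpow_sub_le_of_mem_Icc (p := s / 2) (by linarith) (by positivity) hXI
  have ha_sub : (a ^ 2) ^ (s / 2 - 1) = a ^ (s - 2) := by
    rw [rpow_eq_sq_rpow_half ha.le (s - 2)]; ring_nf
  rw [← rpow_eq_sq_rpow_half (norm_nonneg _), ← rpow_eq_sq_rpow_half ha.le, ha_sub, hX,
    add_sub_cancel_left] at hrem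
  have hsq : (2 * t + b ^ 2) ^ 2 ≤ (3 * (a * b)) ^ 2 :=
    sq_le_sq' (by nlinarith [norm_nonneg η]) (by nlinarith [norm_nonneg η])
  have hK : 0 ≤ s / 2 * (s / 2 - 1) * 4 ^ |s / 2 - 2| * (a ^ 2) ^ (s / 2 - 2) := by
    have : 0 ≤ s / 2 - 1 := by linarith
    have : 0 ≤ s / 2 := by linarith
    positivity
  calc _ ≤ s / 2 * (s / 2 - 1) * 4 ^ |s / 2 - 2| * (a ^ 2) ^ (s / 2 - 2) * (3 * (a * b)) ^ 2 :=
        hrem.trans (mul_le_mul_of_nonneg_left hsq hK)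
    _ = 9 * (s / 2) * (s / 2 - 1) * 4 ^ |s / 2 - 2|
          * (b ^ 2 * ((a ^ 2) ^ (s / 2 - 2) * a ^ 2)) := by ring
    _ = 9 * (s / 2) * (s / 2 - 1) * 4 ^ |s / 2 - 2| * (b ^ 2 * a ^ (s - 2)) := by
        rw [← rpow_add_one (by positivity), show s / 2 - 2 + 1 = s / 2 - 1 by ring, ha_sub]

theorem abs_norm_add_rpow_sub_le_of_two_mul_lt (hs : 2 ≤ s) (h : 2 * ‖η‖ < ‖w‖) :
    |‖w + η‖ ^ s - ‖η‖ ^ s - ‖w‖ ^ s - s * inner ℝ w η * ‖w‖ ^ (s - 2)|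
      ≤ (9 * (s / 2) * (s / 2 - 1) * 4 ^ |s / 2 - 2| + s / 2 + 1)
        * (‖η‖ ^ 2 * ‖w‖ ^ (s - 2) + ‖w‖ * ‖η‖ ^ (s - 1)) := by
  have hrem := abs_norm_add_rpow_sub_rpow_sub_le_of_two_mul_lt hs h
  set a := ‖w‖
  set b := ‖η‖
  have hb : 0 ≤ b := norm_nonneg η
  have hbs : b ^ s ≤ b ^ 2 * a ^ (s - 2) := by
    rw [rpow_eq_sq_mul_rpow_sub_two hb (by linarith)]
    gcongr
    linarith
  have : 0 ≤ b ^ s := by positivity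
  have : 0 ≤ s / 2 * (b ^ 2 * a ^ (s - 2)) := by
    have : 0 ≤ s / 2 := by linarith
    positivity
  have : 0 ≤ (9 * (s / 2) * (s / 2 - 1) * 4 ^ |s / 2 - 2| + s / 2 + 1) * (a * b ^ (s - 1)) := by
    have : 0 ≤ s / 2 - 1 := by linarith
    have : 0 ≤ s / 2 := by linarith
    positivity
  rw [abs_le] at hrem ⊢
  constructor <;> linarith

end

/-- For every real `s ≥ 3` there exists a constant `C_s > 0` such that for all
`ξ, η ∈ ℝ²`:
`| |ξ|^s − |η|^s − |ξ−η|^s − s((ξ−η)·η)|ξ−η|^{s−2} | ≤ C_s (|η|²|ξ−η|^{s−2} + |ξ−η||η|^{s−1})`. -/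
theorem stmt_0 (s : ℝ) (hs : 3 ≤ s) :
    ∃ C : ℝ, 0 < C ∧ ∀ ξ η : EuclideanSpace ℝ (Fin 2),
      |‖ξ‖ ^ s - ‖η‖ ^ s - ‖ξ - η‖ ^ s
          - s * (inner ℝ (ξ - η) η : ℝ) * ‖ξ - η‖ ^ (s - 2)|
        ≤ C * (‖η‖ ^ 2 * ‖ξ - η‖ ^ (s - 2) + ‖ξ - η‖ * ‖η‖ ^ (s - 1)) := by
  have hs0 : 0 < s := by linarith
  refine ⟨max (s * 3 ^ (s - 1) + 2 * s + 4)
    (9 * (s / 2) * (s / 2 - 1) * 4 ^ |s / 2 - 2| + s / 2 + 1),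
    lt_max_of_lt_left (by positivity), fun ξ η => ?_⟩
  have hR : 0 ≤ ‖η‖ ^ 2 * ‖ξ - η‖ ^ (s - 2) + ‖ξ - η‖ * ‖η‖ ^ (s - 1) := by positivity
  rcases le_or_gt ‖ξ - η‖ (2 * ‖η‖) with h | h
  · have hnear := abs_norm_add_rpow_sub_le_of_norm_le_two_mul (s := s) (by linarith) h
    rw [sub_add_cancel] at hnear
    exact hnear.trans (mul_le_mul_of_nonneg_right (le_max_left _ _) hR)
  · have hfar := abs_norm_add_rpow_sub_le_of_two_mul_lt (s := s) (by linarith) h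
    rw [sub_add_cancel] at hfar
    exact hfar.trans (mul_le_mul_of_nonneg_right (le_max_right _ _) hR)
end

section
/- There exists a constant C > 0 such that for all ξ, μ ∈ ℝ² one has | |ξ|² log(10+|μ|) − |ξ| |μ| √(log(10+|μ|)) √(log(10+|ξ|)) | ≤ C |ξ| |ξ−μ| log(10+|μ|) √(log(10+|ξ|)). -/
/-!
Write `a = |ξ|`, `b = |μ|`, `A = log (10 + a)`, `B = log (10 + b)`. The left-hand side factors as
`a √B · |a √B - b √A|`, so since `| a - b | ≤ |ξ - μ|` and `√B ≤ B` it suffices to show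
`|a √B - b √A| ≤ 2 |a - b| √A`. For `b ≤ a`, split `a √B - b √A = (a - b) √B - b (√A - √B)`:
the second term is at most `b (A - B) ≤ (10 + b) (A - B) ≤ a - b` because `log` is concave.
The case `a ≤ b` is the same with the roles exchanged.
-/

open Real

lemma log_sub_log_le_div {x y : ℝ} (hx : 0 < x) (hy : 0 < y) : log x - log y ≤ (x - y) / y := by
  have h := log_le_sub_one_of_pos (div_pos hx hy)
  rwa [log_div hx.ne' hy.ne', div_sub_one hy.ne'] at h

lemma sqrt_sub_sqrt_le_sub {x y : ℝ} (hy : 1 ≤ y) (hyx : y ≤ x) : √x - √y ≤ x - y := by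
  have hsy : 1 ≤ √y := one_le_sqrt.mpr hy
  have hsyx : √y ≤ √x := sqrt_le_sqrt hyx
  have hx : √x ^ 2 = x := sq_sqrt (by linarith)
  have hy' : √y ^ 2 = y := sq_sqrt (by linarith)
  nlinarith

section LogShift

variable {c a b : ℝ}

lemma one_le_log_add (hc : exp 1 ≤ c) (ha : 0 ≤ a) : 1 ≤ log (c + a) := by
  rw [le_log_iff_exp_le (by linarith [exp_pos 1])]
  linarith

lemma one_le_sqrt_log_add (hc : exp 1 ≤ c) (ha : 0 ≤ a) : 1 ≤ √(log (c + a)) :=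
  one_le_sqrt.mpr (one_le_log_add hc ha)

lemma mul_sqrt_log_add_sub_le (hc : exp 1 ≤ c) (hb : 0 ≤ b) (hba : b ≤ a) :
    b * (√(log (c + a)) - √(log (c + b))) ≤ a - b := by
  have hc0 : 0 < c := lt_of_lt_of_le (exp_pos 1) hc
  have hlog : log (c + b) ≤ log (c + a) := log_le_log (by linarith) (by linarith)
  have hsqrt := sqrt_sub_sqrt_le_sub (one_le_log_add hc hb) hlog
  have hconc : (log (c + a) - log (c + b)) * (c + b) ≤ a - b := by
    have h := log_sub_log_le_div (x := c + a) (y := c + b) (by linarith) (by linarith)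
    rw [le_div_iff₀ (by linarith)] at h
    linarith
  calc b * (√(log (c + a)) - √(log (c + b)))
      ≤ b * (log (c + a) - log (c + b)) := mul_le_mul_of_nonneg_left hsqrt hb
    _ ≤ (c + b) * (log (c + a) - log (c + b)) :=
        mul_le_mul_of_nonneg_right (by linarith) (by linarith)
    _ ≤ a - b := by linarith

lemma abs_mul_sqrt_log_add_sub_le_of_le (hc : exp 1 ≤ c) (hb : 0 ≤ b) (hba : b ≤ a) :
    |a * √(log (c + b)) - b * √(log (c + a))| ≤ (a - b) * (√(log (c + b)) + 1) := by
  have hc0 : 0 < c := lt_of_lt_of_le (exp_pos 1) hc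
  have hshift := mul_sqrt_log_add_sub_le hc hb hba
  have hmono : √(log (c + b)) ≤ √(log (c + a)) :=
    sqrt_le_sqrt (log_le_log (by linarith) (by linarith))
  have hB := one_le_sqrt_log_add hc hb
  rw [show a * √(log (c + b)) - b * √(log (c + a))
      = (a - b) * √(log (c + b)) - b * (√(log (c + a)) - √(log (c + b))) by ring, abs_le]
  constructor <;> nlinarith

lemma abs_mul_sqrt_log_add_sub_le (hc : exp 1 ≤ c) (ha : 0 ≤ a) (hb : 0 ≤ b) :
    |a * √(log (c + b)) - b * √(log (c + a))| ≤ 2 * |a - b| * √(log (c + a)) := by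
  have hc0 : 0 < c := lt_of_lt_of_le (exp_pos 1) hc
  have hA := one_le_sqrt_log_add hc ha
  rcases le_total b a with hba | hab
  · have hmono : √(log (c + b)) ≤ √(log (c + a)) :=
      sqrt_le_sqrt (log_le_log (by linarith) (by linarith))
    calc |a * √(log (c + b)) - b * √(log (c + a))|
        ≤ (a - b) * (√(log (c + b)) + 1) := abs_mul_sqrt_log_add_sub_le_of_le hc hb hba
      _ ≤ (a - b) * (2 * √(log (c + a))) :=
          mul_le_mul_of_nonneg_left (by linarith) (by linarith)
      _ = 2 * |a - b| * √(log (c + a)) := by rw [abs_of_nonneg (by linarith)]; ring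
  · calc |a * √(log (c + b)) - b * √(log (c + a))|
        = |b * √(log (c + a)) - a * √(log (c + b))| := abs_sub_comm _ _
      _ ≤ (b - a) * (√(log (c + a)) + 1) := abs_mul_sqrt_log_add_sub_le_of_le hc ha hab
      _ ≤ (b - a) * (2 * √(log (c + a))) :=
          mul_le_mul_of_nonneg_left (by linarith) (by linarith)
      _ = 2 * |a - b| * √(log (c + a)) := by rw [abs_of_nonpos (by linarith)]; ring

end LogShift

/-- There exists `C > 0` such that for all `ξ, μ ∈ ℝ²`:
`| |ξ|² log(10+|μ|) − |ξ||μ| √(log(10+|μ|)) √(log(10+|ξ|)) |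
  ≤ C |ξ| |ξ−μ| log(10+|μ|) √(log(10+|ξ|))`. -/
theorem stmt_5 :
    ∃ C : ℝ, 0 < C ∧ ∀ ξ μ : EuclideanSpace ℝ (Fin 2),
      |‖ξ‖ ^ 2 * Real.log (10 + ‖μ‖)
          - ‖ξ‖ * ‖μ‖ * Real.sqrt (Real.log (10 + ‖μ‖)) * Real.sqrt (Real.log (10 + ‖ξ‖))|
        ≤ C * ‖ξ‖ * ‖ξ - μ‖ * Real.log (10 + ‖μ‖) * Real.sqrt (Real.log (10 + ‖ξ‖)) := by
  refine ⟨2, two_pos, fun ξ μ => ?_⟩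
  have hc : exp 1 ≤ 10 := by linarith [exp_one_lt_d9]
  have hB := one_le_log_add hc (norm_nonneg μ)
  have hsB : √(log (10 + ‖μ‖)) ≤ log (10 + ‖μ‖) := by
    nlinarith [sq_sqrt (by linarith : (0 : ℝ) ≤ log (10 + ‖μ‖)), one_le_sqrt.mpr hB]
  have hfactor : ‖ξ‖ ^ 2 * log (10 + ‖μ‖) - ‖ξ‖ * ‖μ‖ * √(log (10 + ‖μ‖)) * √(log (10 + ‖ξ‖))
      = ‖ξ‖ * √(log (10 + ‖μ‖)) * (‖ξ‖ * √(log (10 + ‖μ‖)) - ‖μ‖ * √(log (10 + ‖ξ‖))) := by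
    linear_combination (-‖ξ‖ ^ 2) * sq_sqrt (by linarith : (0 : ℝ) ≤ log (10 + ‖μ‖))
  have hkey := abs_mul_sqrt_log_add_sub_le hc (norm_nonneg ξ) (norm_nonneg μ)
  have hdist : |‖ξ‖ - ‖μ‖| ≤ ‖ξ - μ‖ := abs_norm_sub_norm_le ξ μ
  rw [hfactor, abs_mul, abs_of_nonneg (by positivity)]
  calc ‖ξ‖ * √(log (10 + ‖μ‖)) * |‖ξ‖ * √(log (10 + ‖μ‖)) - ‖μ‖ * √(log (10 + ‖ξ‖))|
      ≤ ‖ξ‖ * √(log (10 + ‖μ‖)) * (2 * ‖ξ - μ‖ * √(log (10 + ‖ξ‖))) := by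
        gcongr
        exact hkey.trans (by gcongr)
    _ ≤ ‖ξ‖ * log (10 + ‖μ‖) * (2 * ‖ξ - μ‖ * √(log (10 + ‖ξ‖))) := by gcongr
    _ = 2 * ‖ξ‖ * ‖ξ - μ‖ * log (10 + ‖μ‖) * √(log (10 + ‖ξ‖)) := by ring
end

section
/- There exists a constant C > 0 such that for all δ ∈ (0,1), each j ∈ {1,2}, and all ξ, η ∈ ℝ², one has | ξ_j (1 − (10+|ξ|)^{−δ})^{1/2} − (ξ−η)_j (1 − (10+|ξ−η|)^{−δ})^{1/2} | ≤ C δ^{1/2} √(log(10+|ξ−η|)) |η| ( 1 + √(log(10+|η|)) ). -/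
/-!
Write `m(r) = (1 - (10 + r)^{-δ})^{1/2}` and `t = δ log (10 + r) ≥ 2δ`. Since
`t / (1 + t) ≤ 1 - e^{-t} ≤ t`, one has `(4/5) √δ ≤ m(r) ≤ √δ √(log (10 + r))` for `δ ≤ 1`.
As `x ↦ x^{-δ}` is `δ/c`-Lipschitz on `[c, ∞)` for `c ≥ 1`, dividing `m(a)² - m(b)²` by
`m(a) + m(b) ≥ (8/5) √δ` gives `|m(a) - m(b)| ≤ √δ |a - b| / (10 + c)` when `a, b ≥ c ≥ 0`.
With `a = |ξ|`, `b = |ξ - η|`, `h = |η|`: if `2h ≤ a`, split the difference as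
`ξ_j (m(a) - m(b)) + η_j m(b)`, where the first term is `O(√δ h)` because `a / (10 + a/2) ≤ 2`;
if `a < 2h`, bound the two products separately, using `log (10 + a) ≤ 2 log (10 + h)`.
-/

open Real

lemma one_sub_rpow_neg_le_mul_log {x : ℝ} (hx : 0 < x) (δ : ℝ) : 1 - x ^ (-δ) ≤ δ * log x := by
  rw [rpow_def_of_pos hx]
  linarith [add_one_le_exp (log x * -δ)]

lemma div_one_add_le_one_sub_exp_neg {t : ℝ} (ht : 0 ≤ t) : t / (1 + t) ≤ 1 - exp (-t) := by
  have hexp : exp (-t) ≤ (1 + t)⁻¹ := by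
    rw [exp_neg]
    exact inv_anti₀ (by positivity) (by linarith [add_one_le_exp t])
  calc t / (1 + t) = 1 - (1 + t)⁻¹ := by field_simp; ring
    _ ≤ 1 - exp (-t) := by linarith

lemma rpow_neg_sub_rpow_neg_le {δ x y : ℝ} (hδ : 0 ≤ δ) (hx : 1 ≤ x) (hxy : x ≤ y) :
    x ^ (-δ) - y ^ (-δ) ≤ δ * (y - x) / x := by
  have hx0 : 0 < x := by linarith
  have hyx : 1 ≤ y / x := (one_le_div hx0).2 hxy
  calc x ^ (-δ) - y ^ (-δ) = x ^ (-δ) * (1 - (y / x) ^ (-δ)) := by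
        rw [div_rpow (by linarith) hx0.le]; field_simp
    _ ≤ 1 - (y / x) ^ (-δ) :=
        mul_le_of_le_one_left (sub_nonneg.2 (rpow_le_one_of_one_le_of_nonpos hyx (by linarith)))
          (rpow_le_one_of_one_le_of_nonpos hx (by linarith))
    _ ≤ δ * log (y / x) := one_sub_rpow_neg_le_mul_log (by linarith) δ
    _ ≤ δ * (y / x - 1) := mul_le_mul_of_nonneg_left (log_le_sub_one_of_pos (by linarith)) hδ
    _ = δ * (y - x) / x := by field_simp

lemma abs_rpow_neg_sub_rpow_neg_le {δ x y c : ℝ} (hδ : 0 ≤ δ) (hc : 1 ≤ c) (hcx : c ≤ x)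
    (hcy : c ≤ y) : |x ^ (-δ) - y ^ (-δ)| ≤ δ * |x - y| / c := by
  wlog hxy : x ≤ y generalizing x y
  · rw [abs_sub_comm, abs_sub_comm x]
    exact this hcy hcx (le_of_not_ge hxy)
  rw [abs_of_nonneg (sub_nonneg.2 (rpow_le_rpow_of_nonpos (by linarith) hxy (by linarith))),
    abs_of_nonpos (by linarith)]
  calc x ^ (-δ) - y ^ (-δ) ≤ δ * (y - x) / x := rpow_neg_sub_rpow_neg_le hδ (hc.trans hcx) hxy
    _ ≤ δ * (y - x) / c := div_le_div_of_nonneg_left (by nlinarith) (by linarith) hcx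
    _ = δ * -(x - y) / c := by ring

lemma two_le_log_ten : (2 : ℝ) ≤ log 10 := by
  rw [le_log_iff_exp_le (by norm_num), show (2 : ℝ) = 1 + 1 by norm_num, exp_add]
  nlinarith [exp_one_lt_d9, exp_pos 1]

lemma two_le_log_ten_add {r : ℝ} (hr : 0 ≤ r) : 2 ≤ log (10 + r) :=
  two_le_log_ten.trans (log_le_log (by norm_num) (by linarith))

/-- The symbol of `(I - (10 + Λ)^{-δ})^{1/2}` at a frequency of length `r`. -/
noncomputable def sqrtSymbol (δ r : ℝ) : ℝ := √(1 - (10 + r) ^ (-δ))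

section sqrtSymbol

variable {δ r : ℝ}

lemma one_le_sqrt_log_ten_add (hr : 0 ≤ r) : 1 ≤ √(log (10 + r)) :=
  one_le_sqrt.2 (by linarith [two_le_log_ten_add hr])

lemma sqrtSymbol_nonneg : 0 ≤ sqrtSymbol δ r := sqrt_nonneg _

lemma sqrtSymbol_le (hδ : 0 ≤ δ) (hr : 0 ≤ r) : sqrtSymbol δ r ≤ √δ * √(log (10 + r)) := by
  rw [← sqrt_mul hδ]
  exact sqrt_le_sqrt (one_sub_rpow_neg_le_mul_log (by linarith) δ)

lemma two_mul_div_three_le_one_sub_rpow_neg (hδ0 : 0 ≤ δ) (hδ1 : δ ≤ 1) (hr : 0 ≤ r) :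
    2 * δ / 3 ≤ 1 - (10 + r) ^ (-δ) := by
  have ht : 2 * δ ≤ δ * log (10 + r) := by nlinarith [two_le_log_ten_add hr]
  rw [rpow_def_of_pos (by linarith), mul_neg, mul_comm (log _)]
  generalize δ * log (10 + r) = t at ht ⊢
  calc 2 * δ / 3 ≤ t / (1 + t) := by
        rw [div_le_div_iff₀ (by norm_num) (by linarith)]; nlinarith
    _ ≤ 1 - exp (-t) := div_one_add_le_one_sub_exp_neg (by linarith)

lemma sqrtSymbol_sq (hδ : 0 ≤ δ) (hr : 0 ≤ r) : sqrtSymbol δ r ^ 2 = 1 - (10 + r) ^ (-δ) :=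
  sq_sqrt (sub_nonneg.2 (rpow_le_one_of_one_le_of_nonpos (by linarith) (by linarith)))

lemma four_fifths_mul_sqrt_le_sqrtSymbol (hδ0 : 0 ≤ δ) (hδ1 : δ ≤ 1) (hr : 0 ≤ r) :
    4 / 5 * √δ ≤ sqrtSymbol δ r := by
  refine le_sqrt_of_sq_le ?_
  rw [mul_pow, sq_sqrt hδ0]
  linarith [two_mul_div_three_le_one_sub_rpow_neg hδ0 hδ1 hr]

lemma abs_sqrtSymbol_sub_le {a b c : ℝ} (hδ0 : 0 < δ) (hδ1 : δ ≤ 1) (hc : 0 ≤ c) (hca : c ≤ a)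
    (hcb : c ≤ b) : |sqrtSymbol δ a - sqrtSymbol δ b| ≤ √δ * |a - b| / (10 + c) := by
  have hsa := four_fifths_mul_sqrt_le_sqrtSymbol hδ0.le hδ1 (hc.trans hca)
  have hsb := four_fifths_mul_sqrt_le_sqrtSymbol hδ0.le hδ1 (hc.trans hcb)
  have hsδ : 0 < √δ := sqrt_pos.2 hδ0
  have hsq : |sqrtSymbol δ a ^ 2 - sqrtSymbol δ b ^ 2| ≤ δ * |a - b| / (10 + c) := by
    rw [sqrtSymbol_sq hδ0.le (hc.trans hca), sqrtSymbol_sq hδ0.le (hc.trans hcb), abs_sub_comm a]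
    calc |1 - (10 + a) ^ (-δ) - (1 - (10 + b) ^ (-δ))|
        = |(10 + b) ^ (-δ) - (10 + a) ^ (-δ)| := by ring_nf
      _ ≤ δ * |(10 + b) - (10 + a)| / (10 + c) :=
          abs_rpow_neg_sub_rpow_neg_le hδ0.le (by linarith) (by linarith) (by linarith)
      _ = δ * |b - a| / (10 + c) := by ring_nf
  have hfactor : |sqrtSymbol δ a - sqrtSymbol δ b| * (sqrtSymbol δ a + sqrtSymbol δ b)
      = |sqrtSymbol δ a ^ 2 - sqrtSymbol δ b ^ 2| := by
    rw [← abs_of_nonneg (by linarith : 0 ≤ sqrtSymbol δ a + sqrtSymbol δ b), ← abs_mul]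
    ring_nf
  have hscaled : |sqrtSymbol δ a - sqrtSymbol δ b| * 8 / 5 * √δ ≤ √δ * |a - b| / (10 + c) * √δ :=
    calc |sqrtSymbol δ a - sqrtSymbol δ b| * 8 / 5 * √δ
        ≤ |sqrtSymbol δ a - sqrtSymbol δ b| * (sqrtSymbol δ a + sqrtSymbol δ b) := by
          nlinarith [abs_nonneg (sqrtSymbol δ a - sqrtSymbol δ b)]
      _ ≤ δ * |a - b| / (10 + c) := hfactor ▸ hsq
      _ = √δ * |a - b| / (10 + c) * √δ := by
          linear_combination |a - b| / (10 + c) * (mul_self_sqrt hδ0.le).symm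
  have hD : 0 ≤ √δ * |a - b| / (10 + c) := by positivity
  linarith [le_of_mul_le_mul_right hscaled hsδ]

end sqrtSymbol

section Kernel

variable {δ x y a b h : ℝ}

lemma abs_mul_sqrtSymbol_sub_le_of_two_mul_le (hδ0 : 0 < δ) (hδ1 : δ ≤ 1) (hx : |x| ≤ a)
    (hy : |y| ≤ h) (hab : |a - b| ≤ h) (hha : 2 * h ≤ a) :
    |x * sqrtSymbol δ a - (x - y) * sqrtSymbol δ b| ≤ 3 * √δ * √(log (10 + b)) * h := by
  have hh : 0 ≤ h := (abs_nonneg y).trans hy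
  have ha : 0 ≤ a := (abs_nonneg x).trans hx
  have hb : a / 2 ≤ b := by linarith [(abs_le.1 hab).2]
  have hL := one_le_sqrt_log_ten_add (by linarith : 0 ≤ b)
  have hfirst : |x| * |sqrtSymbol δ a - sqrtSymbol δ b| ≤ 2 * √δ * h :=
    calc |x| * |sqrtSymbol δ a - sqrtSymbol δ b| ≤ a * (√δ * |a - b| / (10 + a / 2)) :=
          mul_le_mul hx (abs_sqrtSymbol_sub_le hδ0 hδ1 (by linarith) (by linarith) hb)
            (abs_nonneg _) (by linarith)
      _ ≤ a * (√δ * h / (10 + a / 2)) := by gcongr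
      _ ≤ 2 * √δ * h := by
          rw [mul_div_assoc', div_le_iff₀ (by linarith)]
          nlinarith [mul_nonneg (sqrt_nonneg δ) hh]
  have hsecond : |y| * sqrtSymbol δ b ≤ h * (√δ * √(log (10 + b))) :=
    mul_le_mul hy (sqrtSymbol_le hδ0.le (by linarith)) (sqrt_nonneg _) hh
  calc |x * sqrtSymbol δ a - (x - y) * sqrtSymbol δ b|
      = |x * (sqrtSymbol δ a - sqrtSymbol δ b) + y * sqrtSymbol δ b| := by ring_nf
    _ ≤ |x| * |sqrtSymbol δ a - sqrtSymbol δ b| + |y| * sqrtSymbol δ b :=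
        (abs_add_le _ _).trans_eq (by rw [abs_mul, abs_mul, abs_of_nonneg sqrtSymbol_nonneg])
    _ ≤ 2 * √δ * h + h * (√δ * √(log (10 + b))) := add_le_add hfirst hsecond
    _ ≤ 3 * √δ * √(log (10 + b)) * h := by nlinarith [mul_nonneg (sqrt_nonneg δ) hh]

lemma log_ten_add_le_two_mul_log_ten_add (ha : 0 ≤ a) (hah : a ≤ 2 * h) :
    log (10 + a) ≤ 2 * log (10 + h) :=
  calc log (10 + a) ≤ log ((10 + h) ^ 2) := log_le_log (by linarith) (by nlinarith)
    _ = 2 * log (10 + h) := by rw [log_pow]; norm_num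

lemma abs_mul_sqrtSymbol_sub_le_of_lt_two_mul (hδ : 0 ≤ δ) (hx : |x| ≤ a)
    (hxy : |x - y| ≤ b) (hab : |a - b| ≤ h) (hah : a < 2 * h) :
    |x * sqrtSymbol δ a - (x - y) * sqrtSymbol δ b|
      ≤ 3 * √δ * √(log (10 + b)) * h * (1 + √(log (10 + h))) := by
  have ha : 0 ≤ a := (abs_nonneg x).trans hx
  have hb : 0 ≤ b := (abs_nonneg _).trans hxy
  have hh : 0 ≤ h := by linarith
  have hL := one_le_sqrt_log_ten_add hb
  have hLa : 2 * √(log (10 + a)) ≤ 3 * √(log (10 + h)) := by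
    have hlog := two_le_log_ten_add ha
    have := log_ten_add_le_two_mul_log_ten_add ha hah.le
    nlinarith [sq_sqrt (by linarith : 0 ≤ log (10 + a)), sq_sqrt (by linarith : 0 ≤ log (10 + h)),
      sqrt_nonneg (log (10 + a)), sqrt_nonneg (log (10 + h))]
  have hfirst : |x| * sqrtSymbol δ a ≤ 2 * h * (√δ * √(log (10 + a))) :=
    mul_le_mul (by linarith) (sqrtSymbol_le hδ ha) (sqrt_nonneg _) (by linarith)
  have hsecond : |x - y| * sqrtSymbol δ b ≤ 3 * h * (√δ * √(log (10 + b))) :=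
    mul_le_mul (by linarith [(abs_le.1 hab).1]) (sqrtSymbol_le hδ hb) (sqrt_nonneg _)
      (by linarith)
  calc |x * sqrtSymbol δ a - (x - y) * sqrtSymbol δ b|
      ≤ |x| * sqrtSymbol δ a + |x - y| * sqrtSymbol δ b :=
        (abs_sub _ _).trans_eq (by
          rw [abs_mul, abs_mul, abs_of_nonneg sqrtSymbol_nonneg, abs_of_nonneg sqrtSymbol_nonneg])
    _ ≤ 2 * h * (√δ * √(log (10 + a))) + 3 * h * (√δ * √(log (10 + b))) :=
        add_le_add hfirst hsecond
    _ ≤ 3 * √δ * √(log (10 + b)) * h * (1 + √(log (10 + h))) := by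
        nlinarith [mul_nonneg (mul_nonneg (sqrt_nonneg δ) hh) (sqrt_nonneg (log (10 + h))),
          mul_nonneg (sqrt_nonneg δ) hh]

theorem abs_mul_sqrtSymbol_sub_le (hδ0 : 0 < δ) (hδ1 : δ ≤ 1) (hx : |x| ≤ a) (hy : |y| ≤ h)
    (hxy : |x - y| ≤ b) (hab : |a - b| ≤ h) :
    |x * sqrtSymbol δ a - (x - y) * sqrtSymbol δ b|
      ≤ 3 * √δ * √(log (10 + b)) * h * (1 + √(log (10 + h))) := by
  rcases le_or_gt (2 * h) a with hha | hah
  · have hh : 0 ≤ h := (abs_nonneg y).trans hy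
    calc _ ≤ 3 * √δ * √(log (10 + b)) * h :=
          abs_mul_sqrtSymbol_sub_le_of_two_mul_le hδ0 hδ1 hx hy hab hha
      _ ≤ _ := le_mul_of_one_le_right (by positivity) (le_add_of_nonneg_right (sqrt_nonneg _))
  · exact abs_mul_sqrtSymbol_sub_le_of_lt_two_mul hδ0.le hx hxy hab hah

end Kernel

lemma abs_apply_le_norm {ι : Type*} [Fintype ι] (v : EuclideanSpace ℝ ι) (i : ι) : |v i| ≤ ‖v‖ :=
  (Real.norm_eq_abs _).symm.trans_le (PiLp.norm_apply_le v i)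

/-- Pointwise kernel bound behind the commutator estimate for
`[∂_j (I − (10+Λ)^{−δ})^{1/2}, f]`: there exists `C > 0` such that for all `δ ∈ (0,1)`,
each coordinate `j`, and all `ξ, η ∈ ℝ²`,
`|ξ_j (1 − (10+|ξ|)^{−δ})^{1/2} − (ξ−η)_j (1 − (10+|ξ−η|)^{−δ})^{1/2}|
  ≤ C δ^{1/2} √(log(10+|ξ−η|)) |η| (1 + √(log(10+|η|)))`. -/
theorem stmt_14 :
    ∃ C : ℝ, 0 < C ∧ ∀ δ : ℝ, δ ∈ Set.Ioo (0:ℝ) 1 → ∀ j : Fin 2,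
      ∀ ξ η : EuclideanSpace ℝ (Fin 2),
      |ξ j * Real.sqrt (1 - (10 + ‖ξ‖) ^ (-δ))
          - (ξ - η) j * Real.sqrt (1 - (10 + ‖ξ - η‖) ^ (-δ))|
        ≤ C * δ ^ ((1:ℝ)/2) * Real.sqrt (Real.log (10 + ‖ξ - η‖)) * ‖η‖ *
            (1 + Real.sqrt (Real.log (10 + ‖η‖))) := by
  refine ⟨3, by norm_num, ?_⟩
  rintro δ ⟨hδ0, hδ1⟩ j ξ η
  rw [← sqrt_eq_rpow]
  exact abs_mul_sqrtSymbol_sub_le hδ0 hδ1.le (abs_apply_le_norm ξ j) (abs_apply_le_norm η j)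
    (abs_apply_le_norm (ξ - η) j) (by simpa using abs_norm_sub_norm_le ξ (ξ - η))
end

section
/- Let T > 0 and G > 0 be constants, let F : [0,T] → ℝ be continuous and nonnegative, and let ν > 0 satisfy 0 < 8 ν T G ∫₀ᵀ F(t) dt ≤ 1. Then every differentiable function y : [0,T] → ℝ with y(t) ≥ 0 for all t, y(0) = 0, and y′(t) ≤ ν F(t) + G y(t)² for all t ∈ [0,T], satisfies y(t) ≤ min { 3/(2TG), 12 ν ∫₀ᵀ F(t) dt } for all t ∈ [0,T]. -/
/-!
Put `a := ν ∫₀ᵀ F`, so that `8 T G a ≤ 1`. As long as `y < 3a`, the equation gives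
`y' ≤ ν F + 9 G a²`, and integrating from `0` keeps `y` below `a + 9 G a² T ≤ 17a/8 < 3a`; hence
`y` never reaches `3a`. This is made rigorous by the fencing theorem for the barrier
`ν ∫₀ᵗ F + G M² t + ε`, and `3a ≤ 12a ≤ 3/(2TG)` finishes.
-/

open Set MeasureTheory intervalIntegral

theorem ContinuousOn.exists_continuous_eqOn_Icc {α β : Type*} [LinearOrder α]
    [TopologicalSpace α] [OrderTopology α] [TopologicalSpace β] {a b : α} (hab : a ≤ b)
    {f : α → β} (hf : ContinuousOn f (Icc a b)) :
    ∃ g : α → β, Continuous g ∧ EqOn g f (Icc a b) :=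
  ⟨IccExtend hab ((Icc a b).domRestrict f), continuous_IccExtend_iff.2 hf.domRestrict,
    fun _ hx => IccExtend_of_mem hab _ hx⟩

theorem integral_mem_Icc_integral_of_nonneg {f : ℝ → ℝ} {T t : ℝ}
    (hf : IntervalIntegrable f volume 0 T) (hf₀ : ∀ s ∈ Icc 0 T, 0 ≤ f s) (ht : t ∈ Icc 0 T) :
    ∫ s in (0 : ℝ)..t, f s ∈ Icc 0 (∫ s in (0 : ℝ)..T, f s) := by
  have hint : ∀ {c d}, c ∈ Icc 0 T → d ∈ Icc 0 T → IntervalIntegrable f volume c d :=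
    fun hc hd => hf.mono_set (uIcc_of_le (ht.1.trans ht.2) ▸ uIcc_subset_Icc hc hd)
  have hT : T ∈ Icc 0 T := ⟨ht.1.trans ht.2, le_rfl⟩
  refine ⟨integral_nonneg ht.1 fun s hs => hf₀ s ⟨hs.1, hs.2.trans ht.2⟩, ?_⟩
  rw [← integral_add_adjacent_intervals (hint (left_mem_Icc.2 hT.1) ht) (hint ht hT),
    le_add_iff_nonneg_right]
  exact integral_nonneg ht.2 fun s hs => hf₀ s ⟨ht.1.trans hs.1, hs.2⟩

theorem le_of_hasDerivAt_le_add_mul_sq {T G ν M : ℝ} {F y y' : ℝ → ℝ} (hT : 0 ≤ T) (hG : 0 < G)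
    (hν : 0 ≤ ν) (hF : ContinuousOn F (Icc 0 T)) (hF₀ : ∀ t ∈ Icc 0 T, 0 ≤ F t)
    (hy : ∀ t ∈ Icc 0 T, HasDerivAt y (y' t) t) (hy0 : y 0 ≤ 0)
    (hy' : ∀ t ∈ Icc 0 T, y' t ≤ ν * F t + G * y t ^ 2)
    (hM : ν * (∫ t in (0 : ℝ)..T, F t) + G * M ^ 2 * T < M) :
    ∀ t ∈ Icc 0 T, y t ≤ M := by
  obtain ⟨Fe, hFe, hFeF⟩ := hF.exists_continuous_eqOn_Icc hT
  obtain ⟨ε, hε, hεM⟩ : ∃ ε > 0, ν * (∫ t in (0 : ℝ)..T, F t) + G * M ^ 2 * T + ε < M :=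
    ⟨(M - (ν * (∫ t in (0 : ℝ)..T, F t) + G * M ^ 2 * T)) / 2, by linarith, by linarith⟩
  set B : ℝ → ℝ := fun t => ν * (∫ s in (0 : ℝ)..t, Fe s) + G * M ^ 2 * t + ε
  have hB : ∀ t, HasDerivAt B (ν * Fe t + G * M ^ 2) t := fun t =>
    (((hFe.integral_hasStrictDerivAt 0 t).hasDerivAt.const_mul ν).add
      ((hasDerivAt_id t).const_mul (G * M ^ 2))).add_const ε |>.congr_deriv (by simp)
  -- `0 < B < M` is what makes the inequality strict where `y` touches `B`.
  have hB_mem : ∀ t ∈ Icc 0 T, B t ∈ Ioo 0 M := by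
    intro t ht
    have hΦ := integral_mem_Icc_integral_of_nonneg (hFe.intervalIntegrable 0 T)
      (fun s hs => hFeF hs ▸ hF₀ s hs) ht
    rw [integral_congr (uIcc_of_le hT ▸ hFeF)] at hΦ
    have hMT : G * M ^ 2 * t ≤ G * M ^ 2 * T := by gcongr; exact ht.2
    constructor <;> nlinarith [mul_le_mul_of_nonneg_left hΦ.2 hν,
      mul_nonneg hν hΦ.1, mul_nonneg (mul_nonneg hG.le (sq_nonneg M)) ht.1]
  have hyB : ∀ t ∈ Icc 0 T, y t ≤ B t := by
    refine image_le_of_deriv_right_lt_deriv_boundary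
      (fun t ht => (hy t ht).continuousAt.continuousWithinAt)
      (fun t ht => (hy t (Ico_subset_Icc_self ht)).hasDerivWithinAt) ?_ hB ?_
    · simp only [B, integral_same, mul_zero, zero_add]
      linarith
    · intro t ht hyt
      have ht' := Ico_subset_Icc_self ht
      obtain ⟨hB₀, hBM⟩ := hB_mem t ht'
      have hsq : G * B t ^ 2 < G * M ^ 2 := by gcongr
      calc y' t ≤ ν * F t + G * y t ^ 2 := hy' t ht'
        _ < ν * Fe t + G * M ^ 2 := by rw [hFeF ht', hyt]; linarith
  exact fun t ht => (hyB t ht).trans (hB_mem t ht).2.le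

theorem stmt_16_general (T G ν : ℝ) (hT : 0 < T) (hG : 0 < G)
    (F : ℝ → ℝ) (hFc : ContinuousOn F (Set.Icc 0 T))
    (hFnn : ∀ t ∈ Set.Icc (0:ℝ) T, 0 ≤ F t)
    (hν₁ : 0 < 8 * ν * T * G * ∫ t in (0:ℝ)..T, F t)
    (hν₂ : 8 * ν * T * G * (∫ t in (0:ℝ)..T, F t) ≤ 1)
    (y y' : ℝ → ℝ)
    (hy : ∀ t ∈ Set.Icc (0:ℝ) T, HasDerivAt y (y' t) t)
    (hy0 : y 0 = 0)
    (hyineq : ∀ t ∈ Set.Icc (0:ℝ) T, y' t ≤ ν * F t + G * y t ^ 2) :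
    ∀ t ∈ Set.Icc (0:ℝ) T,
      y t ≤ min (3 / (2 * T * G)) (12 * ν * ∫ t in (0:ℝ)..T, F t) := by
  set I := ∫ t in (0:ℝ)..T, F t
  have hI : 0 ≤ I := integral_nonneg hT.le hFnn
  have ha : 0 < ν * I := pos_of_mul_pos_right (by linarith : 0 < (8 * T * G) * (ν * I))
    (by positivity)
  have hν : 0 ≤ ν := (pos_of_mul_pos_left ha hI).le
  have haTG : 8 * T * G * (ν * I) ≤ 1 := by linarith
  have hbound := le_of_hasDerivAt_le_add_mul_sq (M := 3 * (ν * I)) hT.le hG hν hFc hFnn hy hy0.le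
    hyineq (by nlinarith)
  intro t ht
  refine le_min ?_ (by linarith [hbound t ht])
  calc y t ≤ 3 * (ν * I) := hbound t ht
    _ ≤ 3 / (2 * T * G) := by rw [le_div_iff₀ (by positivity)]; nlinarith

/-- Comparison lemma (Constantin): let `T > 0`, `G > 0`, `F` continuous and nonnegative
on `[0,T]`, and `ν` with `0 < 8νTG ∫₀ᵀ F ≤ 1`. Then every differentiable `y ≥ 0` on `[0,T]`
with `y(0) = 0` and `y′ ≤ ν F + G y²` satisfies
`y(t) ≤ min { 3/(2TG), 12ν ∫₀ᵀ F }` on `[0,T]`. -/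
theorem stmt_16 (T G ν : ℝ) (hT : 0 < T) (hG : 0 < G)
    (F : ℝ → ℝ) (hFc : ContinuousOn F (Set.Icc 0 T))
    (hFnn : ∀ t ∈ Set.Icc (0:ℝ) T, 0 ≤ F t)
    (hν₁ : 0 < 8 * ν * T * G * ∫ t in (0:ℝ)..T, F t)
    (hν₂ : 8 * ν * T * G * (∫ t in (0:ℝ)..T, F t) ≤ 1)
    (y y' : ℝ → ℝ)
    (hy : ∀ t ∈ Set.Icc (0:ℝ) T, HasDerivAt y (y' t) t)
    (hynn : ∀ t ∈ Set.Icc (0:ℝ) T, 0 ≤ y t)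
    (hy0 : y 0 = 0)
    (hyineq : ∀ t ∈ Set.Icc (0:ℝ) T, y' t ≤ ν * F t + G * y t ^ 2) :
    ∀ t ∈ Set.Icc (0:ℝ) T,
      y t ≤ min (3 / (2 * T * G)) (12 * ν * ∫ t in (0:ℝ)..T, F t) :=
  stmt_16_general T G ν hT hG F hFc hFnn hν₁ hν₂ y y' hy hy0 hyineq
end

section
/- Let s ∈ ℝ, let f : ℝ² → ℂ and v : ℝ² → ℂ² be measurable functions satisfying the conjugate symmetries f(−ξ) = conj(f(ξ)) and v(−ζ) = conj(v(ζ)) for all ξ, ζ ∈ ℝ², and suppose v(ζ)·ζ = 0 for all ζ ∈ ℝ² (divergence-free condition on the Fourier side). Assume moreover that (ξ,η) ↦ |ξ|^s |η|^{s+1} |f(ξ)| |f(η)| |v(ξ−η)| is integrable on ℝ² × ℝ². Then Re ∬_{ℝ²×ℝ²} |ξ|^s conj(f(ξ)) |η|^s ( v(ξ−η) · iη ) f(η) dη dξ = 0. -/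
/-!
Write `T(ξ, η)` for the integrand. The reality of `v` gives `conj v(η - ξ) = v(ξ - η)`, and
`v(ξ - η) · (ξ - η) = 0` lets `v(ξ - η) · ξ` be replaced by `v(ξ - η) · η`; together they give
`conj T(η, ξ) = -T(ξ, η)`. The swap `(ξ, η) ↦ (η, ξ)` preserves Lebesgue measure, so the integral
`I` of `T` satisfies `conj I = -I`, i.e. `Re I = 0`. Integrability of `T`, from the hypothesis
and Cauchy–Schwarz `|v · η| ≤ |v| |η|`, identifies the iterated integral with `I`.
-/

open MeasureTheory ComplexConjugate

theorem RCLike.re_integral_prod_eq_zero_of_conj_swap {α 𝕜 : Type*} [RCLike 𝕜]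
    [MeasurableSpace α] {μ : Measure α} [SFinite μ] {F : α × α → 𝕜}
    (hF : ∀ p, conj (F p.swap) = -F p) :
    RCLike.re (∫ p, F p ∂μ.prod μ) = 0 := by
  have h : conj (∫ p, F p ∂μ.prod μ) = -∫ p, F p ∂μ.prod μ := by
    rw [← integral_conj, ← integral_prod_swap, ← integral_neg]
    simp only [hF]
  have := congrArg RCLike.re h
  rw [RCLike.conj_re, map_neg] at this
  linarith

theorem EuclideanSpace.norm_sum_mul_ofReal_le {ι : Type*} [Fintype ι] (w : ι → ℂ)
    (η : EuclideanSpace ℝ ι) :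
    ‖∑ j, w j * (η j : ℂ)‖ ≤ ‖WithLp.toLp 2 w‖ * ‖η‖ := by
  rw [EuclideanSpace.norm_eq, EuclideanSpace.norm_eq]
  calc ‖∑ j, w j * (η j : ℂ)‖ ≤ ∑ j, ‖w j‖ * ‖η j‖ := by
        refine (norm_sum_le _ _).trans_eq ?_
        simp [Complex.norm_real]
    _ ≤ _ := Real.sum_mul_le_sqrt_mul_sqrt _ _ _

namespace Transport

variable {ι : Type*} [Fintype ι] (s : ℝ) (f : EuclideanSpace ℝ ι → ℂ)
  (v : EuclideanSpace ℝ ι → ι → ℂ)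

noncomputable def integrand (p : EuclideanSpace ℝ ι × EuclideanSpace ℝ ι) : ℂ :=
  ((‖p.1‖ ^ s : ℝ) : ℂ) * conj (f p.1) * ((‖p.2‖ ^ s : ℝ) : ℂ) *
    (Complex.I * ∑ j, v (p.1 - p.2) j * ((p.2 j : ℝ) : ℂ)) * f p.2

variable {s f v}

theorem conj_integrand_swap (hv : ∀ ζ j, v (-ζ) j = conj (v ζ j))
    (hdiv : ∀ ζ : EuclideanSpace ℝ ι, ∑ j, v ζ j * (ζ j : ℂ) = 0)
    (p : EuclideanSpace ℝ ι × EuclideanSpace ℝ ι) :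
    conj (integrand s f v p.swap) = -integrand s f v p := by
  obtain ⟨ξ, η⟩ := p
  have hv' : ∀ j, conj (v (η - ξ) j) = v (ξ - η) j := fun j => by
    rw [← hv, neg_sub]
  have hdiv' : ∑ j, v (ξ - η) j * (ξ j : ℂ) = ∑ j, v (ξ - η) j * (η j : ℂ) := by
    rw [← sub_eq_zero, ← Finset.sum_sub_distrib, ← hdiv (ξ - η)]
    simp only [PiLp.sub_apply, Complex.ofReal_sub, mul_sub]
  simp only [integrand, Prod.fst_swap, Prod.snd_swap, map_mul, map_sum, Complex.conj_conj,
    Complex.conj_ofReal, Complex.conj_I, hv', hdiv']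
  ring

theorem norm_integrand_le (p : EuclideanSpace ℝ ι × EuclideanSpace ℝ ι) :
    ‖integrand s f v p‖ ≤ ‖p.1‖ ^ s * ‖p.2‖ ^ (s + 1) * ‖f p.1‖ * ‖f p.2‖ *
      ‖WithLp.toLp 2 (v (p.1 - p.2))‖ := by
  obtain ⟨ξ, η⟩ := p
  have hξ : 0 ≤ ‖ξ‖ ^ s := by positivity
  have hη : 0 ≤ ‖η‖ ^ s := by positivity
  simp only [integrand, norm_mul, Complex.norm_real, Real.norm_of_nonneg hξ,
    Real.norm_of_nonneg hη, Complex.norm_I, RCLike.norm_conj, one_mul]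
  calc ‖ξ‖ ^ s * ‖f ξ‖ * ‖η‖ ^ s * ‖∑ j, v (ξ - η) j * (η j : ℂ)‖ * ‖f η‖
      ≤ ‖ξ‖ ^ s * ‖f ξ‖ * ‖η‖ ^ s * (‖WithLp.toLp 2 (v (ξ - η))‖ * ‖η‖) * ‖f η‖ := by
        gcongr
        exact EuclideanSpace.norm_sum_mul_ofReal_le _ _
    _ = ‖ξ‖ ^ s * (‖η‖ ^ s * ‖η‖ ^ (1 : ℝ)) * ‖f ξ‖ * ‖f η‖ *
          ‖WithLp.toLp 2 (v (ξ - η))‖ := by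
        rw [Real.rpow_one]; ring
    _ ≤ _ := by
        gcongr
        exact Real.le_rpow_add (norm_nonneg η) s 1

theorem measurable_integrand (hfm : Measurable f) (hvm : Measurable v) :
    Measurable (integrand s f v) := by
  unfold integrand
  fun_prop

theorem integrable_integrand (hfm : Measurable f) (hvm : Measurable v)
    (hint : Integrable (fun p : EuclideanSpace ℝ ι × EuclideanSpace ℝ ι =>
      ‖p.1‖ ^ s * ‖p.2‖ ^ (s + 1) * ‖f p.1‖ * ‖f p.2‖ * ‖WithLp.toLp 2 (v (p.1 - p.2))‖)) :
    Integrable (integrand s f v) :=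
  hint.mono' (measurable_integrand hfm hvm).aestronglyMeasurable
    (Filter.Eventually.of_forall norm_integrand_le)

end Transport

theorem stmt_17_general (s : ℝ) (f : EuclideanSpace ℝ (Fin 2) → ℂ)
    (v : EuclideanSpace ℝ (Fin 2) → Fin 2 → ℂ)
    (hfm : Measurable f) (hvm : Measurable v)
    (hv : ∀ ζ, ∀ j : Fin 2, v (-ζ) j = starRingEnd ℂ (v ζ j))
    (hdiv : ∀ ζ : EuclideanSpace ℝ (Fin 2), (∑ j : Fin 2, v ζ j * (ζ j : ℂ)) = 0)
    (hint : Integrable (fun p : EuclideanSpace ℝ (Fin 2) × EuclideanSpace ℝ (Fin 2) =>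
      ‖p.1‖ ^ s * ‖p.2‖ ^ (s + 1) * ‖f p.1‖ * ‖f p.2‖ *
        ‖(WithLp.equiv 2 (Fin 2 → ℂ)).symm (v (p.1 - p.2))‖)) :
    (∫ ξ : EuclideanSpace ℝ (Fin 2), ∫ η : EuclideanSpace ℝ (Fin 2),
        ((‖ξ‖ ^ s : ℝ) : ℂ) * starRingEnd ℂ (f ξ) * ((‖η‖ ^ s : ℝ) : ℂ) *
          (Complex.I * ∑ j : Fin 2, v (ξ - η) j * ((η j : ℝ) : ℂ)) * f η).re = 0 := by
  change (∫ ξ, ∫ η, Transport.integrand s f v (ξ, η)).re = 0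
  rw [← integral_prod _ (Transport.integrable_integrand hfm hvm hint)]
  exact RCLike.re_integral_prod_eq_zero_of_conj_swap (Transport.conj_integrand_swap hv hdiv)

/-- Vanishing of the highest-order transport term: if `f : ℝ² → ℂ` and `v : ℝ² → ℂ²` are
measurable, satisfy the conjugate symmetries `f(−ξ) = conj f(ξ)`, `v(−ζ) = conj v(ζ)`,
`v` is divergence-free on the Fourier side (`v(ζ)·ζ = 0`), and the stated product bound
(with `|v|` the Euclidean norm of `v` on `ℂ²`) is integrable on `ℝ²×ℝ²`, then
`Re ∬ |ξ|^s conj(f(ξ)) |η|^s (v(ξ−η)·iη) f(η) dη dξ = 0`. -/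
theorem stmt_17 (s : ℝ) (f : EuclideanSpace ℝ (Fin 2) → ℂ)
    (v : EuclideanSpace ℝ (Fin 2) → Fin 2 → ℂ)
    (hfm : Measurable f) (hvm : Measurable v)
    (hf : ∀ ξ, f (-ξ) = starRingEnd ℂ (f ξ))
    (hv : ∀ ζ, ∀ j : Fin 2, v (-ζ) j = starRingEnd ℂ (v ζ j))
    (hdiv : ∀ ζ : EuclideanSpace ℝ (Fin 2), (∑ j : Fin 2, v ζ j * (ζ j : ℂ)) = 0)
    (hint : Integrable (fun p : EuclideanSpace ℝ (Fin 2) × EuclideanSpace ℝ (Fin 2) =>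
      ‖p.1‖ ^ s * ‖p.2‖ ^ (s + 1) * ‖f p.1‖ * ‖f p.2‖ *
        ‖(WithLp.equiv 2 (Fin 2 → ℂ)).symm (v (p.1 - p.2))‖)) :
    (∫ ξ : EuclideanSpace ℝ (Fin 2), ∫ η : EuclideanSpace ℝ (Fin 2),
        ((‖ξ‖ ^ s : ℝ) : ℂ) * starRingEnd ℂ (f ξ) * ((‖η‖ ^ s : ℝ) : ℂ) *
          (Complex.I * ∑ j : Fin 2, v (ξ - η) j * ((η j : ℝ) : ℂ)) * f η).re = 0 :=
  stmt_17_general s f v hfm hvm hv hdiv hint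
end

section
/- Let s ∈ ℝ and let f : ℝ² → ℂ be a measurable function satisfying f(−ξ) = conj(f(ξ)) for all ξ ∈ ℝ². Set w(ξ) = |ξ|^s √(log(10+|ξ|)), and assume that (ξ,η) ↦ w(ξ) w(ξ−η) |ξ| |η| |f(ξ)| |f(ξ−η)| |f(η)| is integrable on ℝ² × ℝ². Then Re ∬_{ℝ²×ℝ²} w(ξ) conj(f(ξ)) w(ξ−η) f(ξ−η) ( (ξ−η)^⊥ · η ) f(η) dη dξ = 0. -/
/-!
Substituting `ξ ↦ η - ξ` in the inner integral over `ξ` maps the integrand to its negative: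
`w` is even, `f(-ξ) = conj f(ξ)` swaps the factors `conj f(ξ)` and `f(ξ - η)`, and
`(-ξ)^⊥ · η = -(ξ - η)^⊥ · η`. Hence each inner integral over `ξ` vanishes, and by Fubini
the whole double integral (not only its real part) is zero.
-/

open MeasureTheory

/-- The perpendicular dot product on `ℝ²`: `ζ^⊥ · η` where `ζ^⊥ = (−ζ₂, ζ₁)`. -/
def perpDot (ζ η : EuclideanSpace ℝ (Fin 2)) : ℝ :=
  ζ 0 * η 1 - ζ 1 * η 0

theorem integral_integral_eq_zero_of_sub_left_antisymm {G E : Type*} [MeasurableSpace G]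
    [AddGroup G] [MeasurableAdd G] [MeasurableNeg G] [NormedAddCommGroup E] [NormedSpace ℝ E]
    {μ : Measure G} [SFinite μ] [μ.IsAddLeftInvariant] [μ.IsNegInvariant] {F : G → G → E}
    (hF : Integrable (Function.uncurry F) (μ.prod μ)) (hanti : ∀ ξ η, F (η - ξ) η = -F ξ η) :
    ∫ ξ, ∫ η, F ξ η ∂μ ∂μ = 0 := by
  have hinner : ∀ η, ∫ ξ, F ξ η ∂μ = 0 := fun η => by
    have h := integral_sub_left_eq_self (fun ξ => F ξ η) μ η
    simp_rw [hanti, integral_neg] at h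
    have : IsAddTorsionFree E := .of_isTorsionFree ℝ E
    exact neg_eq_self.mp h
  simp [integral_integral_swap hF, hinner]

lemma perpDot_sub_left (ξ η : EuclideanSpace ℝ (Fin 2)) :
    perpDot (ξ - η) η = perpDot ξ η := by
  simp only [perpDot, PiLp.sub_apply]; ring

lemma perpDot_neg_left (ξ η : EuclideanSpace ℝ (Fin 2)) :
    perpDot (-ξ) η = -perpDot ξ η := by
  simp only [perpDot, PiLp.neg_apply]; ring

lemma abs_perpDot_le (ξ η : EuclideanSpace ℝ (Fin 2)) : |perpDot ξ η| ≤ ‖ξ‖ * ‖η‖ := by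
  have hnorm (ζ : EuclideanSpace ℝ (Fin 2)) : ‖ζ‖ = √(ζ 0 ^ 2 + ζ 1 ^ 2) := by
    simp [EuclideanSpace.norm_eq, Fin.sum_univ_two, sq_abs]
  rw [← Real.sqrt_sq_eq_abs, hnorm, hnorm, ← Real.sqrt_mul (by positivity)]
  refine Real.sqrt_le_sqrt ?_
  unfold perpDot
  nlinarith [sq_nonneg (ξ 0 * η 0 + ξ 1 * η 1)]

lemma continuous_perpDot :
    Continuous fun p : EuclideanSpace ℝ (Fin 2) × EuclideanSpace ℝ (Fin 2) => perpDot p.1 p.2 := by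
  unfold perpDot; fun_prop

def nonlinearIntegrand (w : EuclideanSpace ℝ (Fin 2) → ℝ) (f : EuclideanSpace ℝ (Fin 2) → ℂ)
    (ξ η : EuclideanSpace ℝ (Fin 2)) : ℂ :=
  (w ξ : ℂ) * starRingEnd ℂ (f ξ) * (w (ξ - η) : ℂ) * f (ξ - η) * (perpDot (ξ - η) η : ℂ) * f η

section

variable {w : EuclideanSpace ℝ (Fin 2) → ℝ} {f : EuclideanSpace ℝ (Fin 2) → ℂ}

lemma nonlinearIntegrand_sub_left_eq_neg (hw : ∀ ξ, w (-ξ) = w ξ)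
    (hf : ∀ ξ, f (-ξ) = starRingEnd ℂ (f ξ)) (ξ η : EuclideanSpace ℝ (Fin 2)) :
    nonlinearIntegrand w f (η - ξ) η = -nonlinearIntegrand w f ξ η := by
  have hsub : η - ξ = -(ξ - η) := (neg_sub ξ η).symm
  rw [nonlinearIntegrand, nonlinearIntegrand, sub_sub_cancel_left, hsub, hw, hw, hf, hf,
    Complex.conj_conj, perpDot_neg_left, perpDot_sub_left]
  push_cast
  ring

lemma norm_nonlinearIntegrand_le (ξ η : EuclideanSpace ℝ (Fin 2)) :
    ‖nonlinearIntegrand w f ξ η‖ ≤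
      ‖w ξ * w (ξ - η) * ‖ξ‖ * ‖η‖ * ‖f ξ‖ * ‖f (ξ - η)‖ * ‖f η‖‖ := by
  calc ‖nonlinearIntegrand w f ξ η‖
      = ‖w ξ‖ * ‖w (ξ - η)‖ * |perpDot ξ η| * (‖f ξ‖ * ‖f (ξ - η)‖ * ‖f η‖) := by
        simp only [nonlinearIntegrand, norm_mul, Complex.norm_real, RCLike.norm_conj,
          perpDot_sub_left, Real.norm_eq_abs]
        ring
    _ ≤ ‖w ξ‖ * ‖w (ξ - η)‖ * (‖ξ‖ * ‖η‖) * (‖f ξ‖ * ‖f (ξ - η)‖ * ‖f η‖) := by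
        gcongr
        exact abs_perpDot_le ξ η
    _ = ‖w ξ * w (ξ - η) * ‖ξ‖ * ‖η‖ * ‖f ξ‖ * ‖f (ξ - η)‖ * ‖f η‖‖ := by
        simp only [norm_mul, norm_norm]
        ring

lemma integrable_nonlinearIntegrand (hwm : Measurable w) (hfm : Measurable f)
    (hint : Integrable (fun p : EuclideanSpace ℝ (Fin 2) × EuclideanSpace ℝ (Fin 2) =>
      w p.1 * w (p.1 - p.2) * ‖p.1‖ * ‖p.2‖ * ‖f p.1‖ * ‖f (p.1 - p.2)‖ * ‖f p.2‖)) :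
    Integrable (Function.uncurry (nonlinearIntegrand w f)) (volume.prod volume) := by
  have hmeas : Measurable (Function.uncurry (nonlinearIntegrand w f)) := by
    unfold Function.uncurry nonlinearIntegrand
    have := continuous_perpDot.measurable
    fun_prop
  rw [← Measure.volume_eq_prod]
  exact hint.norm.mono' hmeas.aestronglyMeasurable
    (.of_forall fun p => norm_nonlinearIntegrand_le p.1 p.2)

end

/-- Cancellation corresponding to the antisymmetry of
`log^{1/2}(10+Λ)∇θ · ∇^⊥ log^{1/2}(10+Λ)` for real-valued `θ`: with
`w(ξ) = |ξ|^s √(log(10+|ξ|))` and `f` conjugate-symmetric, under the stated integrability,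
`Re ∬ w(ξ) conj(f(ξ)) w(ξ−η) f(ξ−η) ((ξ−η)^⊥·η) f(η) dη dξ = 0`. -/
theorem stmt_18 (s : ℝ) (f : EuclideanSpace ℝ (Fin 2) → ℂ)
    (hfm : Measurable f)
    (hf : ∀ ξ, f (-ξ) = starRingEnd ℂ (f ξ))
    (w : EuclideanSpace ℝ (Fin 2) → ℝ)
    (hw : ∀ ξ, w ξ = ‖ξ‖ ^ s * Real.sqrt (Real.log (10 + ‖ξ‖)))
    (hint : Integrable (fun p : EuclideanSpace ℝ (Fin 2) × EuclideanSpace ℝ (Fin 2) =>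
      w p.1 * w (p.1 - p.2) * ‖p.1‖ * ‖p.2‖ * ‖f p.1‖ * ‖f (p.1 - p.2)‖ * ‖f p.2‖)) :
    (∫ ξ : EuclideanSpace ℝ (Fin 2), ∫ η : EuclideanSpace ℝ (Fin 2),
        ((w ξ : ℝ) : ℂ) * starRingEnd ℂ (f ξ) * ((w (ξ - η) : ℝ) : ℂ) * f (ξ - η) *
          ((perpDot (ξ - η) η : ℝ) : ℂ) * f η).re = 0 := by
  have hw_even : ∀ ξ, w (-ξ) = w ξ := fun ξ => by rw [hw, hw, norm_neg]
  have hwm : Measurable w := by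
    rw [funext hw]
    fun_prop
  have hzero : ∫ ξ, ∫ η, nonlinearIntegrand w f ξ η = 0 :=
    integral_integral_eq_zero_of_sub_left_antisymm (integrable_nonlinearIntegrand hwm hfm hint)
      (nonlinearIntegrand_sub_left_eq_neg hw_even hf)
  change (∫ ξ, ∫ η, nonlinearIntegrand w f ξ η).re = 0
  rw [hzero, Complex.zero_re]
end
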